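/- In any system containing MacLL, the rules !L, the rule !RK4 (from !*Γ ⇒ C derive !Γ ⇒ !C, where !*Γ bangs some subset of the formulas of Γ), and the single-formula contraction rule C (from Γ[(!A,!A)] ⇒ C derive Γ[!A] ⇒ C), together with cut, the structural-contraction rule CK is derivable: if Γ[(!Δ,!Δ)] ⇒ C is derivable then so is Γ[!Δ] ⇒ C. -/

import Mathlib

/-- Multiplicative exponential formulas: variables, unit, !, ⊗, →, ←. -/
inductive Fm : Type where
  | var : Nat → Fm
  | one : Fm
  | bang : Fm → Fm
  | tens : Fm → Fm → Fm
  | arr : Fm → Fm → Fm      -- A → B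
  | larr : Fm → Fm → Fm     -- B ← A
deriving DecidableEq

/-- Structures: binary trees of formulas, allowing the empty structure. -/
inductive Str : Type where
  | emp : Str
  | leaf : Fm → Str
  | comma : Str → Str → Str
deriving DecidableEq

/-- One-hole structure contexts. -/
inductive Ctx : Type where
  | hole : Ctx
  | commaL : Ctx → Str → Ctx
  | commaR : Str → Ctx → Ctx

/-- Plug a structure into the hole of a context. -/
def Ctx.fill : Ctx → Str → Str
  | .hole, Δ => Δ
  | .commaL c Δ, P => .comma (c.fill P) Δ
  | .commaR Γ c, P => .comma Γ (c.fill P)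

/-- !Γ : bang every leaf formula of a structure. -/
def bangStr : Str → Str
  | .emp => .emp
  | .leaf A => .leaf (.bang A)
  | .comma a b => .comma (bangStr a) (bangStr b)

/-- `StarBang Γ Γ'` : Γ' is Γ with some subset of its leaf formulas banged (!*Γ). -/
inductive StarBang : Str → Str → Prop where
  | emp : StarBang .emp .emp
  | leaf (A : Fm) : StarBang (.leaf A) (.leaf A)
  | leafBang (A : Fm) : StarBang (.leaf A) (.leaf (.bang A))
  | comma {a a' b b' : Str} : StarBang a a' → StarBang b b' →
      StarBang (.comma a b) (.comma a' b')

/-- Proper structures: nonempty binary trees of formulas (no occurrence of the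
empty structure), matching the grammar Γ ::= (Γ,Γ) | F. -/
inductive Str.proper : Str → Prop where
  | leaf (A : Fm) : (Str.leaf A).proper
  | comma {a b : Str} : a.proper → b.proper → (Str.comma a b).proper

/-- Flags selecting the optional modal/structural rules of a system. -/
structure Flags where
  bangL : Bool := false
  bangR : Bool := false
  bangRK : Bool := false
  bangR4 : Bool := false
  bangRK4 : Bool := false
  contr : Bool := false     -- single-formula contraction C
  contrK : Bool := false    -- structural contraction CK
  weak : Bool := false      -- weakening W
  cut : Bool := false

/-- Sequent derivability in MacLL extended by the rules selected by `fl`,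
with nonlogical axioms `Ax`. -/
inductive Der (fl : Flags) (Ax : Set (Str × Fm)) : Str → Fm → Prop where
  | ax {Γ : Str} {C : Fm} : (Γ, C) ∈ Ax → Der fl Ax Γ C
  | init (A : Fm) : Der fl Ax (.leaf A) A
  | tensL (Γ : Ctx) {A B C : Fm} :
      Der fl Ax (Γ.fill (.comma (.leaf A) (.leaf B))) C →
      Der fl Ax (Γ.fill (.leaf (.tens A B))) C
  | tensR {Γ Δ : Str} {A B : Fm} :
      Der fl Ax Γ A → Der fl Ax Δ B → Der fl Ax (.comma Γ Δ) (.tens A B)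
  | arrL (Γ : Ctx) {Δ : Str} {A B C : Fm} :
      Der fl Ax Δ A → Der fl Ax (Γ.fill (.leaf B)) C →
      Der fl Ax (Γ.fill (.comma Δ (.leaf (.arr A B)))) C
  | arrR {Γ : Str} {A B : Fm} :
      Der fl Ax (.comma (.leaf A) Γ) B → Der fl Ax Γ (.arr A B)
  | larrL (Γ : Ctx) {Δ : Str} {A B C : Fm} :
      Der fl Ax Δ A → Der fl Ax (Γ.fill (.leaf B)) C →
      Der fl Ax (Γ.fill (.comma (.leaf (.larr B A)) Δ)) C
  | larrR {Γ : Str} {A B : Fm} :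
      Der fl Ax (.comma Γ (.leaf A)) B → Der fl Ax Γ (.larr B A)
  | oneL (Γ : Ctx) {C : Fm} :
      Der fl Ax (Γ.fill .emp) C → Der fl Ax (Γ.fill (.leaf .one)) C
  | oneR : Der fl Ax .emp .one
  | bangL (Γ : Ctx) {A C : Fm} : fl.bangL = true →
      Der fl Ax (Γ.fill (.leaf A)) C → Der fl Ax (Γ.fill (.leaf (.bang A))) C
  | bangR {A C : Fm} : fl.bangR = true →
      Der fl Ax (.leaf A) C → Der fl Ax (.leaf (.bang A)) (.bang C)
  | bangRK {Γ : Str} {C : Fm} : fl.bangRK = true →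
      Der fl Ax Γ C → Der fl Ax (bangStr Γ) (.bang C)
  | bangR4 {A C : Fm} : fl.bangR4 = true →
      Der fl Ax (.leaf (.bang A)) C → Der fl Ax (.leaf (.bang A)) (.bang C)
  | bangRK4 {Γ Γ' : Str} {C : Fm} : fl.bangRK4 = true →
      StarBang Γ Γ' → Der fl Ax Γ' C → Der fl Ax (bangStr Γ) (.bang C)
  | contr (Γ : Ctx) {A : Fm} {C : Fm} : fl.contr = true →
      Der fl Ax (Γ.fill (.comma (.leaf (.bang A)) (.leaf (.bang A)))) C →
      Der fl Ax (Γ.fill (.leaf (.bang A))) C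
  | contrK (Γ : Ctx) {Δ : Str} {C : Fm} : fl.contrK = true → Δ.proper →
      Der fl Ax (Γ.fill (.comma (bangStr Δ) (bangStr Δ))) C →
      Der fl Ax (Γ.fill (bangStr Δ)) C
  | weak (Γ : Ctx) {A C : Fm} : fl.weak = true →
      Der fl Ax (Γ.fill .emp) C → Der fl Ax (Γ.fill (.leaf (.bang A))) C
  | cut (Γ : Ctx) {Δ : Str} {A C : Fm} : fl.cut = true →
      Der fl Ax Δ A → Der fl Ax (Γ.fill (.leaf A)) C →
      Der fl Ax (Γ.fill Δ) C

/-- Plain MacLL (no modal or structural rules, no cut). -/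
def macll : Flags := {}

/-- MacLL + !L + !RK4 + single-formula contraction C + cut. -/
def sys2 : Flags := { bangL := true, bangRK4 := true, contr := true, cut := true }

/-!
Write `T = ⨂!Δ`. Both copies of `!Δ` in `Γ[(!Δ,!Δ)] ⇒ C` can be folded by `⊗L` into `T`, and
each `T` then turned into `!T` by `!L`; single-formula contraction gives `Γ[!T] ⇒ C`. On the other
side, `!Δ ⇒ T` is an instance of the premise `!*Δ ⇒ T` of `!RK4` (bang every formula), so
`!Δ ⇒ !T`, and a cut on `!T` finishes.
-/

def Ctx.comp : Ctx → Ctx → Ctx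
  | .hole, d => d
  | .commaL c Δ, d => .commaL (c.comp d) Δ
  | .commaR Γ c, d => .commaR Γ (c.comp d)

@[simp]
theorem Ctx.fill_comp (c d : Ctx) (S : Str) : (c.comp d).fill S = c.fill (d.fill S) := by
  induction c <;> simp [Ctx.comp, Ctx.fill, *]

def tensStr : Str → Fm
  | .emp => .one
  | .leaf A => A
  | .comma a b => .tens (tensStr a) (tensStr b)

theorem starBang_bangStr (Δ : Str) : StarBang Δ (bangStr Δ) := by
  induction Δ with
  | emp => exact .emp
  | leaf A => exact .leafBang A
  | comma _ _ iha ihb => exact .comma iha ihb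

namespace Der

variable {fl : Flags} {Ax : Set (Str × Fm)}

theorem tensStr_right (S : Str) : Der fl Ax S (tensStr S) := by
  induction S with
  | emp => exact .oneR
  | leaf A => exact .init A
  | comma _ _ iha ihb => exact .tensR iha ihb

theorem tensStr_left {Γ : Ctx} {S : Str} {C : Fm} (h : Der fl Ax (Γ.fill S) C) :
    Der fl Ax (Γ.fill (.leaf (tensStr S))) C := by
  induction S generalizing Γ with
  | emp => exact .oneL Γ h
  | leaf A => exact h
  | comma a b iha ihb =>
    refine .tensL Γ ?_
    have ha := iha (Γ := Γ.comp (.commaL .hole b))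
    have hb := ihb (Γ := Γ.comp (.commaR (.leaf (tensStr a)) .hole))
    simp only [Ctx.fill_comp, Ctx.fill] at ha hb
    exact hb (ha h)

theorem tensStr_left_comma {Γ : Ctx} {S S' : Str} {C : Fm}
    (h : Der fl Ax (Γ.fill (.comma S S')) C) :
    Der fl Ax (Γ.fill (.comma (.leaf (tensStr S)) (.leaf (tensStr S')))) C := by
  have hS := tensStr_left (fl := fl) (Ax := Ax) (Γ := Γ.comp (.commaL .hole S')) (S := S) (C := C)
  have hS' := tensStr_left (fl := fl) (Ax := Ax) (Γ := Γ.comp (.commaR (.leaf (tensStr S)) .hole))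
    (S := S') (C := C)
  simp only [Ctx.fill_comp, Ctx.fill] at hS hS'
  exact hS' (hS h)

theorem bangL_comma (hL : fl.bangL = true) {Γ : Ctx} {A B C : Fm}
    (h : Der fl Ax (Γ.fill (.comma (.leaf A) (.leaf B))) C) :
    Der fl Ax (Γ.fill (.comma (.leaf (.bang A)) (.leaf (.bang B)))) C := by
  have hA := bangL (Ax := Ax) (Γ.comp (.commaL .hole (.leaf B))) (A := A) (C := C) hL
  have hB := bangL (Ax := Ax) (Γ.comp (.commaR (.leaf (.bang A)) .hole)) (A := B) (C := C) hL
  simp only [Ctx.fill_comp, Ctx.fill] at hA hB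
  exact hB (hA h)

theorem contrK_of_contr (hL : fl.bangL = true) (hRK4 : fl.bangRK4 = true)
    (hC : fl.contr = true) (hcut : fl.cut = true) {Γ : Ctx} {Δ : Str} {C : Fm}
    (h : Der fl Ax (Γ.fill (.comma (bangStr Δ) (bangStr Δ))) C) :
    Der fl Ax (Γ.fill (bangStr Δ)) C := by
  have hcontr : Der fl Ax (Γ.fill (.leaf (.bang (tensStr (bangStr Δ))))) C :=
    .contr Γ hC (bangL_comma hL (tensStr_left_comma h))
  have hpromote : Der fl Ax (bangStr Δ) (.bang (tensStr (bangStr Δ))) :=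
    .bangRK4 hRK4 (starBang_bangStr Δ) (tensStr_right _)
  exact .cut Γ hcut hpromote hcontr

end Der

theorem stmt2_general (Γ : Ctx) (Δ : Str) (C : Fm)
    (h : Der sys2 ∅ (Γ.fill (.comma (bangStr Δ) (bangStr Δ))) C) :
    Der sys2 ∅ (Γ.fill (bangStr Δ)) C :=
  Der.contrK_of_contr rfl rfl rfl rfl h

/-- In any system containing MacLL, !L, !RK4, C and cut, the structural
contraction rule CK is derivable. -/
theorem stmt2 (Γ : Ctx) (Δ : Str) (hΔ : Δ.proper) (C : Fm)
    (h : Der sys2 ∅ (Γ.fill (.comma (bangStr Δ) (bangStr Δ))) C) :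
    Der sys2 ∅ (Γ.fill (bangStr Δ)) C :=
  stmt2_general Γ Δ C h
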